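/- arXiv:1704.06715 — 2 statements merged into one kernel-verified Lean document; each statement's English description precedes it below -/
import Mathlib

section
/- The antipode S of the Hopf algebra QSym of quasisymmetric functions acts on the monomial quasisymmetric function M_F associated to a flag F of subsets of [n] by S(M_F) = (−1)^{|F|+1} Σ_{G ⪯ F^{op}} M_G, where the sum is over all flags G refined by the opposite flag F^{op}. Equivalently, for a composition α of length k(α), S(M_α) = (−1)^{k(α)+1} Σ_{β} M_β, the sum over all compositions β that coarsen the reverse composition rev(α). -/
open scoped Classical Pointwise BigOperators


/-- The dot product pairing on `ℝⁿ`. -/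
def dotp {n : ℕ} (ω x : Fin n → ℝ) : ℝ := ∑ i, ω i * x i

/-- The set of points of `Q` on which the linear functional `⟨ω, ·⟩` attains its maximum. -/
def argmaxSet {n : ℕ} (Q : Set (Fin n → ℝ)) (ω : Fin n → ℝ) : Set (Fin n → ℝ) :=
  {x | x ∈ Q ∧ ∀ y ∈ Q, dotp ω y ≤ dotp ω x}

/-- `G` is a face of `Q` : it is the argmax set of some linear functional. -/
def IsFace {n : ℕ} (Q G : Set (Fin n → ℝ)) : Prop := ∃ ω : Fin n → ℝ, G = argmaxSet Q ω

/-- The dimension of a convex body: the rank of its direction vector space. -/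
noncomputable def pdim {n : ℕ} (s : Set (Fin n → ℝ)) : ℕ := Module.finrank ℝ (vectorSpan ℝ s)

/-- `Q` is a (nonempty) convex polytope. -/
def IsPolytope {n : ℕ} (Q : Set (Fin n → ℝ)) : Prop :=
  ∃ V : Finset (Fin n → ℝ), V.Nonempty ∧ Q = convexHull ℝ (V : Set (Fin n → ℝ))

/-- A flag `∅ ⊂ F₁ ⊂ ⋯ ⊂ F_k ⊂ [n]` of subsets of `[n]`, recorded by its set
`C = {F₁,…,F_k}` of proper nonempty intermediate subsets, which form a chain. -/
def IsFlag (n : ℕ) (C : Finset (Finset (Fin n))) : Prop :=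
  (∀ A ∈ C, A.Nonempty ∧ A ≠ Finset.univ) ∧ (∀ A ∈ C, ∀ B ∈ C, A ⊆ B ∨ B ⊆ A)

/-- The level of an element: the number of members of the chain not containing it.  Elements of
`F_i ∖ F_{i-1}` have level `i - 1`-ish: level `0` on the smallest set, etc. -/
def lv {n : ℕ} (C : Finset (Finset (Fin n))) (p : Fin n) : ℕ := (C.filter (fun A => p ∉ A)).card

/-- The `j`-th member `F_j` of the full chain `∅ = F₀ ⊂ F₁ ⊂ ⋯ ⊂ F_{k+1} = [n]` of the flag. -/
def fullChain {n : ℕ} (C : Finset (Finset (Fin n))) (j : ℕ) : Finset (Fin n) :=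
  Finset.univ.filter (fun p => lv C p < j)

/-- The type of a flag: the composition `(|F₁|-|F₀|, …, |F_{k+1}|-|F_k|)` of `n`. -/
def flagType {n : ℕ} (C : Finset (Finset (Fin n))) : List ℕ :=
  (List.range (C.card + 1)).map (fun j => (fullChain C (j + 1)).card - (fullChain C j).card)

/-- The relative interior of the braid cone of a flag: coordinates are equal inside each block
`F_{i+1} ∖ F_i` and strictly increase from earlier blocks to later blocks. -/
def relintBraidCone {n : ℕ} (C : Finset (Finset (Fin n))) : Set (Fin n → ℝ) :=
  {x | ∀ p q : Fin n, ((∀ A ∈ C, (p ∈ A ↔ q ∈ A)) → x p = x q) ∧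
      ((∃ A ∈ C, p ∈ A ∧ q ∉ A) → x p < x q)}

/-- Homogeneous quasisymmetric functions in the monomial basis: finitely supported
coefficient functions on compositions (lists of positive integers). -/
abbrev QS : Type := (List ℕ) →₀ ℚ

/-- The monomial quasisymmetric function `M_α`. -/
noncomputable def Mc (l : List ℕ) : QS := Finsupp.single l 1

/-- The principal specialization at `-1`:  `ps(M_α)(-1) = (-1)^{k(α)}`, extended linearly. -/
noncomputable def psNeg (f : QS) : ℚ := f.sum (fun l c => c * (-1) ^ l.length)

/-- The `f`-polynomial of a polytope `P ⊆ ℝⁿ`, evaluated at `t`. -/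
noncomputable def fPoly {n : ℕ} (P : Set (Fin n → ℝ)) (t : ℚ) : ℚ :=
  ∑ i ∈ Finset.range n, ((Set.ncard {G : Set (Fin n → ℝ) | IsFace P G ∧ pdim G = i} : ℚ) * t ^ i)

/-- The weighted quasisymmetric enumerator `F_q(Q) = Σ_F q^{rk(F)} M_{type(F)}`, where the rank
statistic `rk` on flags is given as an argument. -/
noncomputable def FqEnum (n : ℕ) (rk : Finset (Finset (Fin n)) → ℕ) (q : ℚ) : QS :=
  ∑ C : Finset (Finset (Fin n)), if IsFlag n C then q ^ (rk C) • Mc (flagType C) else 0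

/-- The multiset of overlapping (quasi-)shuffles of two compositions. -/
def qshuffle : List ℕ → List ℕ → Multiset (List ℕ)
  | [], l => {l}
  | a :: as, [] => {a :: as}
  | a :: as, b :: bs =>
      ((qshuffle as (b :: bs)).map (fun t => a :: t)) +
      ((qshuffle (a :: as) bs).map (fun t => b :: t)) +
      ((qshuffle as bs).map (fun t => (a + b) :: t))
termination_by l₁ l₂ => l₁.length + l₂.length
decreasing_by all_goals (simp only [List.length_cons]; omega)

/-- The product of quasisymmetric functions in the monomial basis: the bilinear extension
of the quasi-shuffle product `M_α · M_β = Σ_{γ ∈ qshuffle α β} M_γ`. -/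
noncomputable def mulQS (f g : QS) : QS :=
  f.sum fun a ca => g.sum fun b cb => (ca * cb) • ((qshuffle a b).map (fun l => Mc l)).sum

/-- `S` is the antipode of the Hopf algebra `QSym`: it is linear and satisfies the antipode
identity `Σ_{βγ = α} S(M_β)·M_γ = (unit ∘ counit)(M_α)` for the deconcatenation coproduct
`Δ(M_α) = Σ_{βγ=α} M_β ⊗ M_γ` and the quasi-shuffle product. -/
def IsAntipode (S : QS →ₗ[ℚ] QS) : Prop :=
  ∀ l : List ℕ,
    (∑ i ∈ Finset.range (l.length + 1), mulQS (S (Mc (l.take i))) (Mc (l.drop i)))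
      = if l = [] then Mc [] else 0

/-- The opposite flag `F^{op} : ∅ ⊂ [n]∖F_k ⊂ ⋯ ⊂ [n]∖F₁ ⊂ [n]`. -/
def FopFlag {n : ℕ} (C : Finset (Finset (Fin n))) : Finset (Finset (Fin n)) :=
  C.image (fun A => Finset.univ \ A)


/-!
The antipode identity `Σ_{βγ=α} S(M_β)·M_γ = ε(M_α)` determines `S(M_α)` from its values
on shorter compositions, so it suffices to check it for
`T(M_α) = (-1)^{ℓ(α)} Σ_{β coarsens rev α} M_β`. In `Σᵢ (-1)ⁱ T(M_{s₁⋯sᵢ})·M_{sᵢ₊₁⋯}`, a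
quasi-shuffle of a coarsening `δ` of `rev(s₁⋯sᵢ)` with `sᵢ₊₁⋯` begins with the first part
of `δ`, with `sᵢ₊₁`, or with their sum; the last two kinds are exactly the terms of index
`i + 1` that begin with the first part of their coarsening, so the sum telescopes to zero.
On the flag side, deleting the smallest member of a flag merges the first two parts of its
type, whence subflags of `E` correspond to coarsenings of `type E`; and complementing
reverses the type.
-/

/-- The coarsenings of a composition: merge runs of consecutive parts. -/
def coarsenings : List ℕ → Multiset (List ℕ)
  | [] => {[]}
  | [a] => {[a]}
  | a :: b :: t => (coarsenings (b :: t)).map (a :: ·) + coarsenings ((a + b) :: t)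

lemma coarsenings_cons_add (a b : ℕ) (t : List ℕ) :
    coarsenings ((a + b) :: t) = (coarsenings (b :: t)).map (List.modifyHead (a + ·)) := by
  induction t generalizing b with
  | nil => simp [coarsenings]
  | cons c t ih =>
    rw [coarsenings, coarsenings, Multiset.map_add, Multiset.map_map, add_assoc, ih]
    rfl

lemma ne_nil_of_mem_coarsenings {a : ℕ} {t δ : List ℕ} (h : δ ∈ coarsenings (a :: t)) :
    δ ≠ [] := by
  induction t generalizing a with
  | nil => simp_all [coarsenings]
  | cons b t ih =>
    rw [coarsenings, Multiset.mem_add, Multiset.mem_map] at h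
    rcases h with ⟨x, _, rfl⟩ | h
    · exact List.cons_ne_nil _ _
    · exact ih h

lemma coarsenings_modifyHead_add (a : ℕ) (τ : List ℕ) :
    coarsenings (τ.modifyHead (a + ·)) = (coarsenings τ).map (List.modifyHead (a + ·)) := by
  cases τ with
  | nil => simp [coarsenings]
  | cons b t => exact coarsenings_cons_add a b t

lemma coarsenings_cons_of_ne_nil (a : ℕ) {τ : List ℕ} (hτ : τ ≠ []) :
    coarsenings (a :: τ) = (coarsenings τ).map (a :: ·)
      + (coarsenings τ).map (List.modifyHead (a + ·)) := by
  obtain ⟨b, t, rfl⟩ := List.exists_cons_of_ne_nil hτ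
  rw [coarsenings, coarsenings_cons_add]

lemma modifyHead_add_injective (a : ℕ) : Function.Injective (List.modifyHead (a + ·)) := by
  intro x y h
  cases x <;> cases y <;> simp_all

lemma qshuffle_nil_right (a : List ℕ) : qshuffle a [] = {a} := by
  cases a <;> simp [qshuffle]

lemma mulQS_Mc_Mc (a b : List ℕ) : mulQS (Mc a) (Mc b) = ((qshuffle a b).map Mc).sum := by
  unfold mulQS Mc
  rw [Finsupp.sum_single_index, Finsupp.sum_single_index] <;> simp

noncomputable def mulQSRight (g : QS) : QS →ₗ[ℚ] QS where
  toFun f := mulQS f g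
  map_add' f₁ f₂ := by
    unfold mulQS
    refine Finsupp.sum_add_index' (fun a => by simp [Finsupp.sum]) fun a c₁ c₂ => ?_
    rw [← Finsupp.sum_add]
    exact Finsupp.sum_congr fun b _ => by rw [add_mul, add_smul]
  map_smul' c f := by
    unfold mulQS
    rw [Finsupp.sum_smul_index (fun a => by simp [Finsupp.sum]), RingHom.id_apply,
      Finsupp.smul_sum]
    refine Finsupp.sum_congr fun a _ => ?_
    rw [Finsupp.smul_sum]
    exact Finsupp.sum_congr fun b _ => by rw [mul_assoc, mul_smul]

lemma mulQSRight_apply (f g : QS) : mulQSRight g f = mulQS f g := rfl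

lemma mulQSRight_Mc_nil : mulQSRight (Mc []) = LinearMap.id :=
  Finsupp.lhom_ext fun a c => by
    rw [← Finsupp.smul_single_one, map_smul, mulQSRight_apply, ← Mc, mulQS_Mc_Mc,
      qshuffle_nil_right]
    simp [Mc]

lemma mulQS_Mc_nil (f : QS) : mulQS f (Mc []) = f :=
  LinearMap.congr_fun mulQSRight_Mc_nil f

noncomputable def coarseningSum (γ : List ℕ) : QS := ((coarsenings γ).map Mc).sum

/-- The terms of `M_δ · M_s` that begin with the first part of `δ`, unmerged. -/
noncomputable def headShuffleSum : List ℕ → List ℕ → QS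
  | [], _ => 0
  | h :: t, s => ((qshuffle t s).map fun l => Mc (h :: l)).sum

lemma headShuffleSum_nil_right {δ : List ℕ} (hδ : δ ≠ []) :
    headShuffleSum δ [] = Mc δ := by
  obtain ⟨h, t, rfl⟩ := List.exists_cons_of_ne_nil hδ
  simp [headShuffleSum, qshuffle_nil_right]

lemma mulQS_Mc_cons_cons (h a : ℕ) (r s : List ℕ) :
    mulQS (Mc (h :: r)) (Mc (a :: s)) = headShuffleSum (h :: r) (a :: s)
      + headShuffleSum (a :: h :: r) s + headShuffleSum ((a + h) :: r) s := by
  rw [mulQS_Mc_Mc, qshuffle]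
  simp only [headShuffleSum, Multiset.map_add, Multiset.sum_add, Multiset.map_map,
    Function.comp_def, Nat.add_comm h a]

/-- For `γ = []` this is the left side of the antipode identity at `M_s` for the candidate
`M_α ↦ (-1)^{ℓ(α)} Σ_{β coarsens rev α} M_β`; the suffix `γ` lets the telescoping induct
on `s`. -/
noncomputable def signedConvolution (γ s : List ℕ) : QS :=
  ∑ i ∈ Finset.range (s.length + 1),
    (-1 : ℚ) ^ i • mulQS (coarseningSum ((s.take i).reverse ++ γ)) (Mc (s.drop i))

lemma signedConvolution_cons (γ : List ℕ) (a : ℕ) (s : List ℕ) :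
    signedConvolution γ (a :: s)
      = mulQS (coarseningSum γ) (Mc (a :: s)) - signedConvolution (a :: γ) s := by
  simp only [signedConvolution, List.length_cons, Finset.sum_range_succ', List.take_succ_cons,
    List.drop_succ_cons, List.reverse_cons, List.append_assoc, List.singleton_append, pow_succ,
    mul_neg_one, neg_smul, Finset.sum_neg_distrib, List.take_zero, List.reverse_nil,
    List.nil_append, pow_zero, one_smul, List.drop_zero]
  abel

lemma signedConvolution_eq_sum_headShuffleSum (s : List ℕ) {γ : List ℕ} (hγ : γ ≠ []) :
    signedConvolution γ s = ((coarsenings γ).map fun δ => headShuffleSum δ s).sum := by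
  obtain ⟨b, t, rfl⟩ := List.exists_cons_of_ne_nil hγ
  clear hγ
  induction s generalizing b t with
  | nil =>
    simp only [signedConvolution, List.length_nil, zero_add, Finset.sum_range_one, pow_zero,
      one_smul, List.take_nil, List.reverse_nil, List.nil_append, List.drop_nil, mulQS_Mc_nil,
      coarseningSum]
    exact congrArg _ (Multiset.map_congr rfl fun δ hδ =>
      (headShuffleSum_nil_right (ne_nil_of_mem_coarsenings hδ)).symm)
  | cons a s ih =>
    have hprod : mulQS (coarseningSum (b :: t)) (Mc (a :: s))
        = ((coarsenings (b :: t)).map fun δ => headShuffleSum δ (a :: s)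
            + headShuffleSum (a :: δ) s + headShuffleSum (δ.modifyHead (a + ·)) s).sum := by
      rw [coarseningSum, ← mulQSRight_apply, map_multiset_sum, Multiset.map_map]
      refine congrArg _ (Multiset.map_congr rfl fun δ hδ => ?_)
      obtain ⟨h, r, rfl⟩ := List.exists_cons_of_ne_nil (ne_nil_of_mem_coarsenings hδ)
      exact mulQS_Mc_cons_cons h a r s
    rw [signedConvolution_cons, ih, hprod, coarsenings_cons_of_ne_nil a (List.cons_ne_nil b t),
      Multiset.map_add, Multiset.sum_add, Multiset.map_map, Multiset.map_map,
      Multiset.sum_map_add, Multiset.sum_map_add]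
    simp only [Function.comp_def]
    abel

lemma signedConvolution_nil_left {l : List ℕ} (hl : l ≠ []) : signedConvolution [] l = 0 := by
  obtain ⟨a, s, rfl⟩ := List.exists_cons_of_ne_nil hl
  rw [signedConvolution_cons, signedConvolution_eq_sum_headShuffleSum s (List.cons_ne_nil a []),
    sub_eq_zero]
  simp [coarsenings, coarseningSum, headShuffleSum, mulQS_Mc_Mc, qshuffle]

/-- `Σ_{βγ = l} f(β) · M_γ`, the left side of the antipode identity for `M_α ↦ f α`. -/
noncomputable def deconcatConvolution (f : List ℕ → QS) (l : List ℕ) : QS :=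
  ∑ i ∈ Finset.range (l.length + 1), mulQS (f (l.take i)) (Mc (l.drop i))

lemma deconcatConvolution_eq_add (f : List ℕ → QS) (l : List ℕ) :
    deconcatConvolution f l
      = ∑ i ∈ Finset.range l.length, mulQS (f (l.take i)) (Mc (l.drop i)) + f l := by
  rw [deconcatConvolution, Finset.sum_range_succ, List.take_length, List.drop_length,
    mulQS_Mc_nil]

/-- The last term `f l · M_[] = f l` determines `f` recursively. -/
lemma eq_of_deconcatConvolution_eq {f g : List ℕ → QS}
    (h : ∀ l, deconcatConvolution f l = deconcatConvolution g l) : f = g := by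
  funext l
  induction hl : l.length using Nat.strong_induction_on generalizing l with
  | _ m ih =>
    have hprefix : ∀ i ∈ Finset.range l.length,
        mulQS (f (l.take i)) (Mc (l.drop i)) = mulQS (g (l.take i)) (Mc (l.drop i)) := by
      intro i hi
      have hi : i < l.length := Finset.mem_range.1 hi
      rw [ih i (hl ▸ hi) (l.take i) (List.length_take_of_le hi.le)]
    have := h l
    rwa [deconcatConvolution_eq_add, deconcatConvolution_eq_add, Finset.sum_congr rfl hprefix,
      add_right_inj] at this

lemma deconcatConvolution_signedCoarseningSum (l : List ℕ) :
    deconcatConvolution (fun α => (-1 : ℚ) ^ α.length • coarseningSum α.reverse) l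
      = if l = [] then Mc [] else 0 := by
  have hconv : deconcatConvolution (fun α => (-1 : ℚ) ^ α.length • coarseningSum α.reverse) l
      = signedConvolution [] l := by
    refine Finset.sum_congr rfl fun i hi => ?_
    rw [← mulQSRight_apply, map_smul, mulQSRight_apply, List.append_nil,
      List.length_take_of_le (Nat.lt_succ_iff.1 (Finset.mem_range.1 hi))]
  rw [hconv]
  split_ifs with hl
  · subst hl
    simp [signedConvolution, coarseningSum, coarsenings, mulQS_Mc_nil]
  · exact signedConvolution_nil_left hl

theorem IsAntipode.apply_Mc {S : QS →ₗ[ℚ] QS} (hS : IsAntipode S) (α : List ℕ) :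
    S (Mc α) = (-1 : ℚ) ^ α.length • coarseningSum α.reverse := by
  have hconv (l : List ℕ) : deconcatConvolution (fun β => S (Mc β)) l
      = deconcatConvolution (fun β => (-1 : ℚ) ^ β.length • coarseningSum β.reverse) l :=
    (hS l).trans (deconcatConvolution_signedCoarseningSum l).symm
  exact congrFun (eq_of_deconcatConvolution_eq hconv) α

lemma Finset.map_val_powerset_insert {α β : Type*} [DecidableEq α] {s : Finset α} {a : α}
    (ha : a ∉ s) (f : Finset α → β) :
    (insert a s).powerset.val.map f
      = s.powerset.val.map f + s.powerset.val.map (f ∘ insert a) := by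
  have hsum (t : Finset (Finset α)) (g : Finset α → β) :
      ∑ x ∈ t, ({g x} : Multiset β) = t.val.map g := by
    rw [Finset.sum_eq_multiset_sum, ← Multiset.sum_map_singleton (t.val.map g),
      Multiset.map_map]
    rfl
  simp only [← hsum, Finset.sum_powerset_insert ha, Function.comp_apply]

section Flags

variable {n : ℕ}

/-- The block `F_{j+1} ∖ F_j` of the full chain of the flag. -/
def flagBlock (C : Finset (Finset (Fin n))) (j : ℕ) : Finset (Fin n) :=
  Finset.univ.filter fun p => lv C p = j

lemma card_fullChain_succ (C : Finset (Finset (Fin n))) (j : ℕ) :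
    (fullChain C (j + 1)).card = (fullChain C j).card + (flagBlock C j).card := by
  have hunion : fullChain C (j + 1) = fullChain C j ∪ flagBlock C j := by
    rw [fullChain, fullChain, flagBlock, ← Finset.filter_or]
    exact Finset.filter_congr fun p _ => Nat.lt_succ_iff_lt_or_eq
  rw [hunion, Finset.card_union_of_disjoint]
  exact Finset.disjoint_filter.2 fun p _ hlt heq => (heq ▸ hlt).false

lemma flagType_eq_map_card_flagBlock (C : Finset (Finset (Fin n))) :
    flagType C = (List.range (C.card + 1)).map fun j => (flagBlock C j).card :=
  List.map_congr_left fun j _ => by rw [card_fullChain_succ, Nat.add_sub_cancel_left]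

lemma lv_le_card (C : Finset (Finset (Fin n))) (p : Fin n) : lv C p ≤ C.card :=
  Finset.card_filter_le _ _

lemma IsFlag.subset {C D : Finset (Finset (Fin n))} (hC : IsFlag n C) (h : D ⊆ C) :
    IsFlag n D :=
  ⟨fun A hA => hC.1 A (h hA), fun A hA B hB => hC.2 A (h hA) B (h hB)⟩

lemma IsFlag.exists_forall_subset {C : Finset (Finset (Fin n))} (hC : IsFlag n C)
    (hne : C.Nonempty) : ∃ m ∈ C, ∀ A ∈ C, m ⊆ A := by
  obtain ⟨m, hm, hmin⟩ := C.exists_min_image Finset.card hne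
  refine ⟨m, hm, fun A hA => ?_⟩
  rcases hC.2 m hm A hA with h | h
  · exact h
  · rw [Finset.eq_of_subset_of_card_le h (hmin A hA)]

section Insert

variable {D : Finset (Finset (Fin n))} {m : Finset (Fin n)}

lemma lv_insert_of_forall_subset (hm : m ∉ D) (hsub : ∀ A ∈ D, m ⊆ A) (p : Fin n) :
    lv (insert m D) p = if p ∈ m then 0 else lv D p + 1 := by
  unfold lv
  rw [Finset.filter_insert]
  split_ifs with hp
  · rw [Finset.card_eq_zero, Finset.filter_eq_empty_iff]
    exact fun A hA hpA => hpA (hsub A hA hp)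
  · exact Finset.card_insert_of_notMem fun h => hm (Finset.mem_of_mem_filter m h)

noncomputable def insertTypeTail (D : Finset (Finset (Fin n))) (m : Finset (Fin n)) : List ℕ :=
  (List.range (D.card + 1)).map fun j => (flagBlock D j \ m).card

lemma flagType_insert (hm : m ∉ D) (hsub : ∀ A ∈ D, m ⊆ A) :
    flagType (insert m D) = m.card :: insertTypeTail D m := by
  have hblock (j : ℕ) :
      flagBlock (insert m D) j = if j = 0 then m else flagBlock D (j - 1) \ m := by
    ext p
    simp only [flagBlock, Finset.mem_filter, Finset.mem_univ, true_and,
      lv_insert_of_forall_subset hm hsub]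
    split_ifs <;> simp_all <;> omega
  rw [flagType_eq_map_card_flagBlock, Finset.card_insert_of_notMem hm, List.range_succ_eq_map,
    List.map_cons, List.map_map, insertTypeTail]
  simp [hblock, Function.comp_def]

lemma modifyHead_insertTypeTail (hsub : ∀ A ∈ D, m ⊆ A) :
    (insertTypeTail D m).modifyHead (m.card + ·) = flagType D := by
  have hm0 : m ⊆ flagBlock D 0 := fun p hp => by
    simp only [flagBlock, Finset.mem_filter, Finset.mem_univ, true_and, lv,
      Finset.card_eq_zero, Finset.filter_eq_empty_iff, not_not]
    exact fun A hA => hsub A hA hp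
  have hdisj (j : ℕ) : flagBlock D (j + 1) \ m = flagBlock D (j + 1) :=
    Finset.sdiff_eq_self_of_disjoint (Finset.disjoint_of_subset_right hm0 (by
      rw [flagBlock, flagBlock]
      exact Finset.disjoint_filter.2 fun p _ h1 h0 => by omega))
  rw [insertTypeTail, flagType_eq_map_card_flagBlock, List.range_succ_eq_map, List.map_cons,
    List.map_cons, List.modifyHead_cons, List.map_map, List.map_map,
    add_comm, Finset.card_sdiff_add_card_eq_card hm0]
  simp [Function.comp_def, hdisj]

end Insert

theorem IsFlag.map_flagType_powerset {E : Finset (Finset (Fin n))} (hE : IsFlag n E) :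
    E.powerset.val.map flagType = coarsenings (flagType E) := by
  induction E using Finset.strongInduction with
  | _ E ih =>
    rcases E.eq_empty_or_nonempty with rfl | hne
    · simp [flagType, coarsenings]
    obtain ⟨m, hmE, hmin⟩ := hE.exists_forall_subset hne
    set E' := E.erase m
    have hmE' : m ∉ E' := Finset.notMem_erase m E
    have hsub (D) (hD : D ∈ E'.powerset) : m ∉ D ∧ ∀ A ∈ D, m ⊆ A :=
      ⟨fun h => hmE' (Finset.mem_powerset.1 hD h),
        fun A hA => hmin A (Finset.mem_of_mem_erase (Finset.mem_powerset.1 hD hA))⟩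
    have ihE' := ih E' (Finset.erase_ssubset hmE) (hE.subset (E.erase_subset m))
    have hins : E'.powerset.val.map (flagType ∘ insert m)
        = (E'.powerset.val.map (insertTypeTail · m)).map (m.card :: ·) := by
      rw [Multiset.map_map]
      exact Multiset.map_congr rfl fun D hD =>
        flagType_insert (hsub D hD).1 (hsub D hD).2
    have hrest : E'.powerset.val.map (insertTypeTail · m) = coarsenings (insertTypeTail E' m) := by
      apply Multiset.map_injective (modifyHead_add_injective m.card)
      rw [← coarsenings_modifyHead_add, modifyHead_insertTypeTail (hsub E' (by simp)).2, ← ihE',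
        Multiset.map_map]
      exact Multiset.map_congr rfl fun D hD => modifyHead_insertTypeTail (hsub D hD).2
    have hne' : insertTypeTail E' m ≠ [] := by simp [insertTypeTail]
    rw [← Finset.insert_erase hmE, Finset.map_val_powerset_insert hmE', ihE', hins, hrest,
      flagType_insert hmE' (hsub E' (by simp)).2, coarsenings_cons_of_ne_nil _ hne',
      ← coarsenings_modifyHead_add, modifyHead_insertTypeTail (hsub E' (by simp)).2, add_comm]

end Flags

section Opposite

variable {n : ℕ}

lemma FopFlag_eq_image_compl (C : Finset (Finset (Fin n))) : FopFlag C = C.image compl := by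
  rw [FopFlag]
  congr 1

lemma card_FopFlag (C : Finset (Finset (Fin n))) : (FopFlag C).card = C.card := by
  rw [FopFlag_eq_image_compl, Finset.card_image_of_injective _ compl_injective]

lemma IsFlag.FopFlag {C : Finset (Finset (Fin n))} (hC : IsFlag n C) : IsFlag n (FopFlag C) := by
  rw [FopFlag_eq_image_compl]
  refine ⟨fun B hB => ?_, fun B hB B' hB' => ?_⟩
  · obtain ⟨A, hA, rfl⟩ := Finset.mem_image.1 hB
    obtain ⟨hAne, hAuniv⟩ := hC.1 A hA
    exact ⟨Finset.nonempty_iff_ne_empty.2 (mt (Finset.compl_eq_empty_iff A).1 hAuniv),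
      mt (Finset.compl_eq_univ_iff A).1 hAne.ne_empty⟩
  · obtain ⟨A, hA, rfl⟩ := Finset.mem_image.1 hB
    obtain ⟨A', hA', rfl⟩ := Finset.mem_image.1 hB'
    simp only [Finset.compl_subset_compl]
    exact (hC.2 A hA A' hA').symm

lemma lv_FopFlag (C : Finset (Finset (Fin n))) (p : Fin n) :
    lv (FopFlag C) p = C.card - lv C p := by
  rw [lv, FopFlag_eq_image_compl, Finset.filter_image,
    Finset.card_image_of_injective _ compl_injective, lv,
    ← Finset.card_filter_add_card_filter_not (s := C) (p := fun A => p ∈ A)]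
  simp

lemma flagBlock_FopFlag (C : Finset (Finset (Fin n))) {j : ℕ} (hj : j ≤ C.card) :
    flagBlock (FopFlag C) j = flagBlock C (C.card - j) := by
  ext p
  simp only [flagBlock, Finset.mem_filter, Finset.mem_univ, true_and, lv_FopFlag]
  have := lv_le_card C p
  omega

lemma flagType_FopFlag (C : Finset (Finset (Fin n))) :
    flagType (FopFlag C) = (flagType C).reverse := by
  rw [flagType_eq_map_card_flagBlock, flagType_eq_map_card_flagBlock, card_FopFlag,
    ← List.map_reverse, List.range_eq_range', List.reverse_range', List.map_map,
    ← List.range_eq_range']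
  refine List.map_congr_left fun j hj => ?_
  rw [Function.comp_apply, flagBlock_FopFlag C (Nat.lt_succ_iff.1 (List.mem_range.1 hj))]
  congr 2
  omega

end Opposite

theorem antipode_monomial_flag_general (n : ℕ)
    (S : QS →ₗ[ℚ] QS) (hS : IsAntipode S)
    (C : Finset (Finset (Fin n))) (hC : IsFlag n C) :
    S (Mc (flagType C))
      = ((-1 : ℚ) ^ (C.card + 1)) • ∑ D ∈ (FopFlag C).powerset, Mc (flagType D) := by
  have hlen : (flagType C).length = C.card + 1 := by simp [flagType]
  rw [hS.apply_Mc, hlen, ← flagType_FopFlag, coarseningSum, ← hC.FopFlag.map_flagType_powerset,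
    Multiset.map_map, Finset.sum_eq_multiset_sum]
  rfl

/-- The antipode `S` of `QSym` acts on the monomial quasisymmetric function
`M_F = M_{type(F)}` associated to a flag `F` of subsets of `[n]` by
`S(M_F) = (-1)^{|F|+1} Σ_{G ⪯ F^{op}} M_G`, the sum running over all flags `G` refined by the
opposite flag `F^{op}` (i.e. over all subchains of `F^{op}`). -/
theorem antipode_monomial_flag (n : ℕ) (hn : 0 < n)
    (S : QS →ₗ[ℚ] QS) (hS : IsAntipode S)
    (C : Finset (Finset (Fin n))) (hC : IsFlag n C) :
    S (Mc (flagType C))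
      = ((-1 : ℚ) ^ (C.card + 1)) • ∑ D ∈ (FopFlag C).powerset, Mc (flagType D) :=
  antipode_monomial_flag_general n S hS C hC
end

section
/- For a connected building set B on [n] and any flag L of subsets of [n], the P_B-rank of L equals the rank of L according to B: rk_{P_B}(L) = rk_B(L) = n − c(B/L), where c(B/L) is the number of connected components of the quotient building set B/L. -/
/-!
The level functional `ω_p = #{A ∈ L : p ∉ A}` lies in the relative interior of the braid cone of
`L`, so the face `π_{P_B}(L)` is the set where `ω` is maximised on `P_B`.  Maximising a linear
functional on a Minkowski sum maximises it on every summand, so this face is the Minkowski sum,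
over `I ∈ B`, of the simplices spanned by the elements of `I` of top level; these top-level parts
are exactly the members of `B/L`.  The face therefore spans
`⨆_{K ∈ B/L} span{e_i - e_j : i, j ∈ K}`, which only depends on the partition of `[n]` into the
connected components of `B/L` and has dimension `n - c(B/L)`.  On the other hand `B/L` is the disjoint union of the minors
`(B|_{I_j})/I_{j-1}`, each having at most as many components as its ground set has elements, so
`rk_B(L) + c(B/L) = n`.
-/

open scoped Classical Pointwise BigOperators


/-- A building set on the ground set `[n]`: a collection of nonempty subsets containing all
singletons and closed under unions of intersecting members. -/
def IsBuildingSet (n : ℕ) (B : Finset (Finset (Fin n))) : Prop :=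
  (∀ I ∈ B, I.Nonempty) ∧ (∀ i : Fin n, {i} ∈ B) ∧
    (∀ I ∈ B, ∀ J ∈ B, (I ∩ J).Nonempty → I ∪ J ∈ B)

/-- The face `Conv{e_i : i ∈ I}` of the standard simplex. -/
noncomputable def simplexFace {n : ℕ} (I : Finset (Fin n)) : Set (Fin n → ℝ) :=
  convexHull ℝ ((fun i => (Pi.single i 1 : Fin n → ℝ)) '' (I : Set (Fin n)))

/-- The nestohedron `P_B = Σ_{I ∈ B} Conv{e_i : i ∈ I}` (Minkowski sum). -/
noncomputable def nestoh {n : ℕ} (B : Finset (Finset (Fin n))) : Set (Fin n → ℝ) :=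
  ∑ I ∈ B, simplexFace I

/-- The facet `F_I` of the nestohedron labelled by `I ∈ B ∖ {[n]}`: the face on which
`Σ_{i ∈ I} x_i` is minimized. -/
noncomputable def facetOf {n : ℕ} (B : Finset (Finset (Fin n))) (I : Finset (Fin n)) :
    Set (Fin n → ℝ) :=
  argmaxSet (nestoh B) (fun j => if j ∈ I then (-1 : ℝ) else 0)

/-- A nested set for a connected building set `B`: a subcollection of `B ∖ {[n]}` any two of whose
members are nested or disjoint, such that no union of at least two pairwise disjoint members
belongs to `B`. -/
def IsNestedSet {n : ℕ} (B N : Finset (Finset (Fin n))) : Prop :=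
  N ⊆ B.erase Finset.univ ∧
  (∀ I ∈ N, ∀ J ∈ N, I ⊆ J ∨ J ⊆ I ∨ Disjoint I J) ∧
  (∀ D ∈ N.powerset, 2 ≤ D.card → (∀ I ∈ D, ∀ J ∈ D, I ≠ J → Disjoint I J) →
    D.sup id ∉ B)

/-- The set of roots of `I` with respect to a nested set `N`:
`I^{root} = I ∖ ⋃ {J ∈ N : J ⊊ I}`. -/
def rootsOf {n : ℕ} (N : Finset (Finset (Fin n))) (I : Finset (Fin n)) : Finset (Fin n) :=
  I \ ((N.filter (fun J => J ⊂ I)).sup id)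

/-- The preorder `≼_G` on `[n]` attached to the face `G` of `P_B` with nested set `N`:
`i ≼_G j` iff `i ∈ I` and `j ∈ I^{root}` for some `I ∈ N ∪ {[n]}`. -/
def preN {n : ℕ} (N : Finset (Finset (Fin n))) (i j : Fin n) : Prop :=
  ∃ I ∈ insert Finset.univ N, i ∈ I ∧ j ∈ rootsOf N I

/-- The face of the nestohedron `P_B` corresponding to a nested set `N`:
`G = F_{I₁} ∩ ⋯ ∩ F_{I_m}` (and `G = P_B` when `N = ∅`). -/
noncomputable def faceOfNested {n : ℕ} (B N : Finset (Finset (Fin n))) : Set (Fin n → ℝ) :=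
  nestoh B ∩ ⋂ I ∈ N, facetOf B I

/-- The number of connected components of a building set: the number of its maximal members. -/
def cComp {n : ℕ} (B : Finset (Finset (Fin n))) : ℕ :=
  (B.filter (fun I => ∀ J ∈ B, I ⊆ J → I = J)).card

/-- The minor `(B|_X)/Y` (restriction to `X` followed by contraction of `Y ⊆ X`): all nonempty
`I ⊆ X ∖ Y` such that `I ∪ S' ∈ B` for some `S' ⊆ Y`. -/
def bsMinor {n : ℕ} (B : Finset (Finset (Fin n))) (X Y : Finset (Fin n)) :
    Finset (Finset (Fin n)) :=
  (X \ Y).powerset.filter (fun I => I.Nonempty ∧ ∃ S' ∈ Y.powerset, I ∪ S' ∈ B)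

/-- The rank `rk_B(L) = Σ_j rk(B|_{I_j}/I_{j-1})` of a flag `L` with respect to `B`, where
`rk(B') = (size of the ground set of B') - c(B')`. -/
def rkB {n : ℕ} (B : Finset (Finset (Fin n))) (C : Finset (Finset (Fin n))) : ℕ :=
  ∑ j ∈ Finset.range (C.card + 1),
    ((fullChain C (j + 1)).card - (fullChain C j).card -
      cComp (bsMinor B (fullChain C (j + 1)) (fullChain C j)))

/-- The quotient building set `B/L = ⊕_j (B|_{I_j})/I_{j-1}` of a flag `L`. -/
def quotientBS {n : ℕ} (B : Finset (Finset (Fin n))) (C : Finset (Finset (Fin n))) :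
    Finset (Finset (Fin n)) :=
  (Finset.range (C.card + 1)).biUnion
    (fun j => bsMinor B (fullChain C (j + 1)) (fullChain C j))

open Finset

variable {n : ℕ}

def maxMembers (M : Finset (Finset (Fin n))) : Finset (Finset (Fin n)) :=
  M.filter (fun I => ∀ J ∈ M, I ⊆ J → I = J)

def IsUnionClosed (M : Finset (Finset (Fin n))) : Prop :=
  ∀ I ∈ M, ∀ J ∈ M, (I ∩ J).Nonempty → I ∪ J ∈ M

section MaxMembers

variable {M : Finset (Finset (Fin n))}

theorem cComp_eq_card_maxMembers (M : Finset (Finset (Fin n))) :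
    cComp M = #(maxMembers M) := rfl

theorem mem_maxMembers {T : Finset (Fin n)} :
    T ∈ maxMembers M ↔ T ∈ M ∧ ∀ J ∈ M, T ⊆ J → T = J := mem_filter

theorem maxMembers_subset (M : Finset (Finset (Fin n))) : maxMembers M ⊆ M := filter_subset _ _

theorem IsUnionClosed.subset_of_mem_maxMembers (hM : IsUnionClosed M) {K T : Finset (Fin n)}
    (hK : K ∈ M) (hT : T ∈ maxMembers M) (hKT : (K ∩ T).Nonempty) : K ⊆ T := by
  have hT := mem_maxMembers.1 hT
  rw [hT.2 _ (hM K hK T hT.1 hKT) subset_union_right]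
  exact subset_union_left

theorem IsUnionClosed.pairwiseDisjoint_maxMembers (hM : IsUnionClosed M) :
    (maxMembers M : Set (Finset (Fin n))).PairwiseDisjoint id := by
  intro T hT T' hT' hne
  rw [Function.onFun, id, id, disjoint_iff_ne]
  rintro p hp _ hp' rfl
  refine hne (le_antisymm ?_ ?_)
  · exact hM.subset_of_mem_maxMembers (maxMembers_subset M hT) hT' ⟨p, mem_inter.2 ⟨hp, hp'⟩⟩
  · exact hM.subset_of_mem_maxMembers (maxMembers_subset M hT') hT ⟨p, mem_inter.2 ⟨hp', hp⟩⟩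

theorem exists_mem_maxMembers_superset {I : Finset (Fin n)} (hI : I ∈ M) :
    ∃ T ∈ maxMembers M, I ⊆ T := by
  obtain ⟨T, hT, hmax⟩ := exists_max_image {J ∈ M | I ⊆ J} card ⟨I, mem_filter.2 ⟨hI, subset_rfl⟩⟩
  rw [mem_filter] at hT
  refine ⟨T, mem_maxMembers.2 ⟨hT.1, fun J hJ hTJ => ?_⟩, hT.2⟩
  exact eq_of_subset_of_card_le hTJ (hmax J (mem_filter.2 ⟨hJ, hT.2.trans hTJ⟩))

theorem IsUnionClosed.cComp_le_card (hM : IsUnionClosed M) (hne : ∀ I ∈ M, I.Nonempty)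
    {S : Finset (Fin n)} (hS : ∀ I ∈ M, I ⊆ S) : cComp M ≤ #S :=
  (card_le_card_biUnion hM.pairwiseDisjoint_maxMembers
    fun T hT => hne T (maxMembers_subset M hT)).trans
  (card_le_card (biUnion_subset.2 fun T hT => hS T (maxMembers_subset M hT)))

end MaxMembers

section BuildingSet

variable {B : Finset (Finset (Fin n))}

theorem IsBuildingSet.isUnionClosed (hB : IsBuildingSet n B) : IsUnionClosed B := hB.2.2

def IsBuildingSet.components (hB : IsBuildingSet n B) : Finpartition (univ : Finset (Fin n)) where
  parts := maxMembers B
  supIndep := supIndep_iff_pairwiseDisjoint.2 hB.isUnionClosed.pairwiseDisjoint_maxMembers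
  sup_parts := by
    refine eq_univ_of_forall fun i => ?_
    obtain ⟨T, hT, hiT⟩ := exists_mem_maxMembers_superset (hB.2.1 i)
    exact mem_sup.2 ⟨T, hT, hiT (mem_singleton_self i)⟩
  bot_notMem h := not_nonempty_empty (hB.1 _ (maxMembers_subset B h))

theorem mem_bsMinor {X Y I : Finset (Fin n)} :
    I ∈ bsMinor B X Y ↔ I ⊆ X \ Y ∧ I.Nonempty ∧ ∃ S' ⊆ Y, I ∪ S' ∈ B := by
  simp [bsMinor]

theorem IsUnionClosed.bsMinor (hB : IsUnionClosed B) (X Y : Finset (Fin n)) :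
    IsUnionClosed (bsMinor B X Y) := by
  intro I hI J hJ hIJ
  obtain ⟨hIs, hIne, S, hS, hSB⟩ := mem_bsMinor.1 hI
  obtain ⟨hJs, -, S', hS', hS'B⟩ := mem_bsMinor.1 hJ
  refine mem_bsMinor.2 ⟨union_subset hIs hJs, hIne.mono subset_union_left,
    S ∪ S', union_subset hS hS', ?_⟩
  have hunion := hB _ hSB _ hS'B (hIJ.mono (inter_subset_inter subset_union_left subset_union_left))
  rwa [union_union_union_comm] at hunion

end BuildingSet

section Levels

variable {B C : Finset (Finset (Fin n))}

theorem mem_fullChain {j : ℕ} {p : Fin n} : p ∈ fullChain C j ↔ lv C p < j := by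
  simp [fullChain]

theorem fullChain_mono {j k : ℕ} (h : j ≤ k) : fullChain C j ⊆ fullChain C k :=
  fun _ hp => mem_fullChain.2 ((mem_fullChain.1 hp).trans_le h)

theorem mem_fullChain_succ_sdiff {j : ℕ} {p : Fin n} :
    p ∈ fullChain C (j + 1) \ fullChain C j ↔ lv C p = j := by
  rw [mem_sdiff, mem_fullChain, mem_fullChain]
  omega

theorem card_fullChain_succ_sub (C : Finset (Finset (Fin n))) (j : ℕ) :
    #(fullChain C (j + 1)) - #(fullChain C j) = #{p | lv C p = j} := by
  rw [← card_sdiff_of_subset (fullChain_mono (Nat.le_succ j))]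
  congr 1
  ext p
  rw [mem_fullChain_succ_sdiff, mem_filter]
  exact (and_iff_right (mem_univ p)).symm

theorem lv_eq_of_mem_bsMinor {j : ℕ} {I : Finset (Fin n)}
    (hI : I ∈ bsMinor B (fullChain C (j + 1)) (fullChain C j)) {p : Fin n} (hp : p ∈ I) :
    lv C p = j :=
  mem_fullChain_succ_sdiff.1 ((mem_bsMinor.1 hI).1 hp)

theorem mem_quotientBS {I : Finset (Fin n)} :
    I ∈ quotientBS B C ↔ ∃ j < C.card + 1, I ∈ bsMinor B (fullChain C (j + 1)) (fullChain C j) := by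
  simp [quotientBS]

theorem quotientBS_isBuildingSet (hB : IsBuildingSet n B) : IsBuildingSet n (quotientBS B C) := by
  refine ⟨fun I hI => ?_, fun i => ?_, fun I hI J hJ hIJ => ?_⟩
  · obtain ⟨j, -, hI⟩ := mem_quotientBS.1 hI
    exact (mem_bsMinor.1 hI).2.1
  · refine mem_quotientBS.2 ⟨lv C i, Nat.lt_succ_of_le (card_filter_le _ _),
      mem_bsMinor.2 ⟨?_, singleton_nonempty i, ∅, empty_subset _, by simpa using hB.2.1 i⟩⟩
    simpa using mem_fullChain_succ_sdiff.2 rfl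
  · obtain ⟨j, hj, hI⟩ := mem_quotientBS.1 hI
    obtain ⟨j', -, hJ⟩ := mem_quotientBS.1 hJ
    obtain ⟨p, hp⟩ := hIJ
    obtain rfl : j = j' := by
      rw [← lv_eq_of_mem_bsMinor hI (mem_inter.1 hp).1, lv_eq_of_mem_bsMinor hJ (mem_inter.1 hp).2]
    exact mem_quotientBS.2 ⟨j, hj, hB.isUnionClosed.bsMinor _ _ I hI J hJ ⟨p, hp⟩⟩

end Levels

section RankOfFlag

variable {B C : Finset (Finset (Fin n))}

theorem maxMembers_quotientBS :
    maxMembers (quotientBS B C) = (range (C.card + 1)).biUnion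
      (fun j => maxMembers (bsMinor B (fullChain C (j + 1)) (fullChain C j))) := by
  rw [maxMembers, quotientBS, filter_biUnion]
  refine biUnion_congr rfl fun j hj => filter_congr fun I hI => ⟨?_, ?_⟩
  · exact fun h J hJ => h J (mem_quotientBS.2 ⟨j, mem_range.1 hj, hJ⟩)
  · intro h J hJ hIJ
    obtain ⟨j', -, hJ⟩ := mem_quotientBS.1 hJ
    obtain ⟨p, hp⟩ := (mem_bsMinor.1 hI).2.1
    obtain rfl : j' = j := by
      rw [← lv_eq_of_mem_bsMinor hJ (hIJ hp), lv_eq_of_mem_bsMinor hI hp]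
    exact h J hJ hIJ

theorem cComp_quotientBS :
    cComp (quotientBS B C) = ∑ j ∈ range (C.card + 1),
      cComp (bsMinor B (fullChain C (j + 1)) (fullChain C j)) := by
  rw [cComp_eq_card_maxMembers, maxMembers_quotientBS, card_biUnion]
  · rfl
  intro j _ j' _ hne
  refine disjoint_left.2 fun I hI hI' => hne ?_
  obtain ⟨p, hp⟩ := (mem_bsMinor.1 (maxMembers_subset _ hI)).2.1
  rw [← lv_eq_of_mem_bsMinor (maxMembers_subset _ hI) hp,
    lv_eq_of_mem_bsMinor (maxMembers_subset _ hI') hp]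

theorem cComp_bsMinor_le (hB : IsBuildingSet n B) (j : ℕ) :
    cComp (bsMinor B (fullChain C (j + 1)) (fullChain C j)) ≤ #{p | lv C p = j} :=
  (hB.isUnionClosed.bsMinor _ _).cComp_le_card (fun _ hI => (mem_bsMinor.1 hI).2.1)
    fun _ hI _ hp => mem_filter.2 ⟨mem_univ _, lv_eq_of_mem_bsMinor hI hp⟩

theorem sum_card_lv_eq (C : Finset (Finset (Fin n))) :
    ∑ j ∈ range (C.card + 1), #{p | lv C p = j} = n := by
  have hlv : ∀ p ∈ (univ : Finset (Fin n)), lv C p ∈ range (C.card + 1) :=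
    fun p _ => mem_range.2 (Nat.lt_succ_of_le (card_filter_le _ _))
  rw [← card_eq_sum_card_fiberwise hlv, card_univ, Fintype.card_fin]

theorem rkB_add_cComp_quotientBS (hB : IsBuildingSet n B) :
    rkB B C + cComp (quotientBS B C) = n := by
  rw [rkB, cComp_quotientBS, ← sum_add_distrib]
  conv_rhs => rw [← sum_card_lv_eq C]
  refine sum_congr rfl fun j _ => ?_
  rw [card_fullChain_succ_sub]
  exact Nat.sub_add_cancel (cComp_bsMinor_le hB j)

end RankOfFlag

theorem Set.Nonempty.finsetSum {ι M : Type*} [AddCommMonoid M] {I : Finset ι} {s : ι → Set M}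
    (hs : ∀ i ∈ I, (s i).Nonempty) : (∑ i ∈ I, s i).Nonempty := by
  classical
  choose x hx using hs
  refine ⟨_, Set.finsetSum_mem_finsetSum I s (fun i => if h : i ∈ I then x i h else 0)
    fun i hi => ?_⟩
  simpa only [dif_pos hi] using hx i hi

section Argmax

variable {ω : Fin n → ℝ}

theorem dotp_eq_dotProduct (ω x : Fin n → ℝ) : dotp ω x = ω ⬝ᵥ x := rfl

theorem dotp_add (ω x y : Fin n → ℝ) : dotp ω (x + y) = dotp ω x + dotp ω y :=
  dotProduct_add ω x y

theorem dotp_single_one (ω : Fin n → ℝ) (i : Fin n) : dotp ω (Pi.single i 1) = ω i :=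
  dotProduct_single_one ω i

theorem dotp_sum_smul {ι : Type*} (ω : Fin n → ℝ) (s : Finset ι) (w : ι → ℝ)
    (v : ι → Fin n → ℝ) : dotp ω (∑ i ∈ s, w i • v i) = ∑ i ∈ s, w i * dotp ω (v i) := by
  simp only [dotp_eq_dotProduct, dotProduct_sum, dotProduct_smul, smul_eq_mul]

theorem argmaxSet_add {s t : Set (Fin n → ℝ)} (hs : (argmaxSet s ω).Nonempty)
    (ht : (argmaxSet t ω).Nonempty) : argmaxSet (s + t) ω = argmaxSet s ω + argmaxSet t ω := by
  obtain ⟨a₀, ha₀, hmax_a₀⟩ := hs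
  obtain ⟨b₀, hb₀, hmax_b₀⟩ := ht
  ext x
  constructor
  · rintro ⟨⟨a, ha, b, hb, rfl⟩, hmax⟩
    have hsum := hmax (a₀ + b₀) (Set.add_mem_add ha₀ hb₀)
    rw [dotp_add, dotp_add] at hsum
    have ha_le := hmax_a₀ a ha
    have hb_le := hmax_b₀ b hb
    exact ⟨a, ⟨ha, fun c hc => by linarith [hmax_a₀ c hc]⟩,
      b, ⟨hb, fun d hd => by linarith [hmax_b₀ d hd]⟩, rfl⟩
  · rintro ⟨a, ⟨ha, hmax_a⟩, b, ⟨hb, hmax_b⟩, rfl⟩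
    refine ⟨Set.add_mem_add ha hb, ?_⟩
    rintro _ ⟨c, hc, d, hd, rfl⟩
    rw [dotp_add, dotp_add]
    linarith [hmax_a c hc, hmax_b d hd]

theorem argmaxSet_sum {ι : Type*} (I : Finset ι) (s : ι → Set (Fin n → ℝ))
    (hs : ∀ i ∈ I, (argmaxSet (s i) ω).Nonempty) :
    argmaxSet (∑ i ∈ I, s i) ω = ∑ i ∈ I, argmaxSet (s i) ω := by
  classical
  induction I using Finset.induction_on with
  | empty => ext x; simp +contextual [argmaxSet]
  | insert i I hi ih =>
    rw [forall_mem_insert] at hs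
    have hne := ih hs.2 ▸ Set.Nonempty.finsetSum hs.2
    rw [sum_insert hi, sum_insert hi, argmaxSet_add hs.1 hne, ih hs.2]

theorem argmaxSet_convexHull (s : Finset (Fin n → ℝ)) (ω : Fin n → ℝ) :
    argmaxSet (convexHull ℝ ↑s) ω = convexHull ℝ (argmaxSet ↑s ω) := by
  rcases s.eq_empty_or_nonempty with rfl | hne
  · simp [argmaxSet]
  obtain ⟨v₀, hv₀, hmax⟩ := s.exists_max_image (dotp ω) hne
  have hlin : IsLinearMap ℝ (dotp ω) := (dotProductBilin ℝ ℝ ω).isLinear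
  have hle : convexHull ℝ ↑s ⊆ {x | dotp ω x ≤ dotp ω v₀} :=
    convexHull_min hmax (convex_halfSpace_le hlin _)
  have heq : convexHull ℝ (argmaxSet ↑s ω) ⊆ {x | dotp ω x = dotp ω v₀} :=
    convexHull_min (fun v hv => le_antisymm (hmax v hv.1) (hv.2 v₀ hv₀))
      (convex_hyperplane hlin _)
  ext x
  refine ⟨fun ⟨hx, hxmax⟩ => ?_, fun hx => ⟨convexHull_mono (fun v hv => hv.1) hx,
    fun y hy => (hle hy).trans (heq hx).ge⟩⟩
  have hxM : dotp ω x = dotp ω v₀ := le_antisymm (hle hx) (hxmax v₀ (subset_convexHull ℝ _ hv₀))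
  obtain ⟨w, hw₀, hw₁, rfl⟩ := (s.convexHull_eq (R := ℝ)).subset hx
  -- `⟨ω, x⟩` is a `w`-average of values `⟨ω, v⟩ ≤ ⟨ω, v₀⟩`, so `w` vanishes off the maximisers.
  have hgap : ∑ v ∈ s, w v * (dotp ω v₀ - dotp ω v) = 0 := by
    rw [s.centerMass_eq_of_sum_1 _ hw₁, dotp_sum_smul] at hxM
    simp only [mul_sub, sum_sub_distrib, ← sum_mul, hw₁, one_mul]
    exact sub_eq_zero.2 hxM.symm
  have hsupp : ∀ v ∈ s, w v ≠ 0 → v ∈ argmaxSet ↑s ω := by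
    intro v hv hwv
    have h0 := (sum_eq_zero_iff_of_nonneg fun u hu =>
      mul_nonneg (hw₀ u hu) (sub_nonneg.2 (hmax u hu))).1 hgap v hv
    rw [mul_eq_zero, sub_eq_zero] at h0
    exact ⟨hv, fun u hu => (h0.resolve_left hwv).symm ▸ hmax u hu⟩
  rw [← centerMass_filter_ne_zero]
  refine centerMass_mem_convexHull _ (fun v hv => hw₀ v (mem_filter.1 hv).1) ?_
    fun v hv => hsupp v (mem_filter.1 hv).1 (mem_filter.1 hv).2
  rw [sum_filter_ne_zero, hw₁]
  exact one_pos

theorem argmaxSet_simplexFace (I : Finset (Fin n)) (ω : Fin n → ℝ) :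
    argmaxSet (simplexFace I) ω = simplexFace {i ∈ I | ∀ j ∈ I, ω j ≤ ω i} := by
  have himage := argmaxSet_convexHull (I.image fun i => (Pi.single i 1 : Fin n → ℝ)) ω
  rw [coe_image] at himage
  rw [simplexFace, himage, simplexFace]
  congr 1
  ext x
  constructor
  · rintro ⟨⟨i, hi, rfl⟩, hmax⟩
    refine ⟨i, mem_filter.2 ⟨hi, fun j hj => ?_⟩, rfl⟩
    simpa only [dotp_single_one] using hmax _ ⟨j, hj, rfl⟩
  · rintro ⟨i, hi, rfl⟩
    rw [mem_coe, mem_filter] at hi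
    refine ⟨⟨i, hi.1, rfl⟩, ?_⟩
    rintro _ ⟨j, hj, rfl⟩
    rw [dotp_single_one, dotp_single_one]
    exact hi.2 j hj

end Argmax

section VectorSpan

variable {k V : Type*} [Ring k] [AddCommGroup V] [Module k V]

theorem vectorSpan_add {s t : Set V} (hs : s.Nonempty) (ht : t.Nonempty) :
    vectorSpan k (s + t) = vectorSpan k s ⊔ vectorSpan k t := by
  obtain ⟨a₀, ha₀⟩ := hs
  obtain ⟨b₀, hb₀⟩ := ht
  apply le_antisymm
  · rw [vectorSpan_def, Submodule.span_le]
    rintro _ ⟨_, ⟨a, ha, b, hb, rfl⟩, _, ⟨a', ha', b', hb', rfl⟩, rfl⟩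
    change a + b - (a' + b') ∈ vectorSpan k s ⊔ vectorSpan k t
    rw [add_sub_add_comm]
    exact Submodule.add_mem_sup (vsub_mem_vectorSpan k ha ha') (vsub_mem_vectorSpan k hb hb')
  · refine sup_le ?_ ?_ <;> rw [vectorSpan_def, Submodule.span_le]
    · rintro _ ⟨a, ha, a', ha', rfl⟩
      have := vsub_mem_vectorSpan k (Set.add_mem_add ha hb₀) (Set.add_mem_add ha' hb₀)
      rwa [vsub_eq_sub, add_sub_add_right_eq_sub] at this
    · rintro _ ⟨b, hb, b', hb', rfl⟩
      have := vsub_mem_vectorSpan k (Set.add_mem_add ha₀ hb) (Set.add_mem_add ha₀ hb')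
      rwa [vsub_eq_sub, add_sub_add_left_eq_sub] at this

theorem vectorSpan_sum {ι : Type*} (I : Finset ι) (s : ι → Set V)
    (hs : ∀ i ∈ I, (s i).Nonempty) :
    vectorSpan k (∑ i ∈ I, s i) = ⨆ i ∈ I, vectorSpan k (s i) := by
  classical
  induction I using Finset.induction_on with
  | empty => simp [← Set.singleton_zero]
  | insert i I hi ih =>
    rw [forall_mem_insert] at hs
    rw [sum_insert hi, vectorSpan_add hs.1 (Set.Nonempty.finsetSum hs.2), ih hs.2,
      Finset.iSup_insert]

theorem sum_smul_mem_vectorSpan {ι : Type*} {T : Finset ι} (v : ι → V) {w : ι → k}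
    (hw : ∑ i ∈ T, w i = 0) : ∑ i ∈ T, w i • v i ∈ vectorSpan k (v '' ↑T) := by
  rcases T.eq_empty_or_nonempty with rfl | ⟨r, hr⟩
  · rw [sum_empty]
    exact zero_mem _
  have hshift : ∑ i ∈ T, w i • v i = ∑ i ∈ T, w i • (v i - v r) := by
    simp only [smul_sub, sum_sub_distrib, ← sum_smul, hw, zero_smul, sub_zero]
  rw [hshift]
  exact Submodule.sum_mem _ fun i hi =>
    Submodule.smul_mem _ _ (vsub_mem_vectorSpan k ⟨i, hi, rfl⟩ ⟨r, hr, rfl⟩)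

end VectorSpan

namespace Finpartition

variable {k α : Type*} [Field k] [Fintype α] [DecidableEq α] (P : Finpartition (univ : Finset α))

def partSums : (α → k) →ₗ[k] (P.parts → k) :=
  LinearMap.pi fun T => ∑ p ∈ (T : Finset α), LinearMap.proj p

theorem partSums_apply (x : α → k) (T : P.parts) : P.partSums x T = ∑ p ∈ (T : Finset α), x p := by
  simp [partSums]

theorem partSums_single_one (a : α) (T : P.parts) :
    P.partSums (Pi.single a (1 : k)) T = if a ∈ (T : Finset α) then 1 else 0 := by
  simp [partSums_apply, Pi.single_apply]

theorem partSums_surjective : Function.Surjective (P.partSums (k := k)) := by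
  choose r hr using fun T : P.parts => P.nonempty_of_mem_parts T.2
  intro y
  refine ⟨∑ T : P.parts, y T • Pi.single (r T) 1, funext fun T' => ?_⟩
  have hr_mem : ∀ T : P.parts, r T ∈ (T' : Finset α) ↔ T = T' := fun T =>
    ⟨fun h => Subtype.ext (P.eq_of_mem_parts T.2 T'.2 (hr T) h), fun h => h ▸ hr T⟩
  simp only [map_sum, map_smul, Finset.sum_apply, Pi.smul_apply, partSums_single_one, hr_mem,
    smul_eq_mul, mul_ite, mul_one, mul_zero, sum_ite_eq', mem_univ, if_true]

theorem iSup_vectorSpan_parts_eq_ker :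
    ⨆ T ∈ P.parts, vectorSpan k ((fun i => (Pi.single i 1 : α → k)) '' (T : Set α)) =
      LinearMap.ker P.partSums := by
  apply le_antisymm
  · refine iSup₂_le fun T hT => ?_
    rw [vectorSpan_def, Submodule.span_le]
    rintro _ ⟨_, ⟨i, hi, rfl⟩, _, ⟨j, hj, rfl⟩, rfl⟩
    refine LinearMap.mem_ker.2 (funext fun T' => ?_)
    have hiff : i ∈ (T' : Finset α) ↔ j ∈ (T' : Finset α) :=
      ⟨fun h => P.eq_of_mem_parts T'.2 hT h hi ▸ hj, fun h => P.eq_of_mem_parts T'.2 hT h hj ▸ hi⟩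
    change P.partSums (k := k) (Pi.single i 1 - Pi.single j 1) T' = 0
    rw [map_sub, Pi.sub_apply, partSums_single_one, partSums_single_one, if_congr hiff rfl rfl,
      sub_self]
  · intro x hx
    have hdecomp : ∑ i, x i • Pi.single i (1 : k) =
        ∑ T ∈ P.parts, ∑ i ∈ T, x i • Pi.single i (1 : k) := calc
      _ = ∑ i ∈ P.parts.biUnion id, x i • Pi.single i (1 : k) := by rw [P.biUnion_parts]
      _ = _ := sum_biUnion P.disjoint
    rw [pi_eq_sum_univ' x, hdecomp]
    refine Submodule.sum_mem _ fun T hT => Submodule.mem_iSup_of_mem T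
      (Submodule.mem_iSup_of_mem hT (sum_smul_mem_vectorSpan _ ?_))
    rw [← P.partSums_apply x ⟨T, hT⟩, LinearMap.mem_ker.1 hx]
    rfl

theorem finrank_iSup_vectorSpan_parts :
    Module.finrank k ↥(⨆ T ∈ P.parts,
      vectorSpan k ((fun i => (Pi.single i 1 : α → k)) '' (T : Set α))) =
      Fintype.card α - #P.parts := by
  have hrank := (P.partSums (k := k)).finrank_range_add_finrank_ker
  rw [LinearMap.range_eq_top.2 P.partSums_surjective, finrank_top,
    Module.finrank_fintype_fun_eq_card, Fintype.card_coe, Module.finrank_fintype_fun_eq_card,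
    ← iSup_vectorSpan_parts_eq_ker] at hrank
  omega

end Finpartition

theorem vectorSpan_simplexFace (I : Finset (Fin n)) :
    vectorSpan ℝ (simplexFace I) = vectorSpan ℝ ((fun i => (Pi.single i 1 : Fin n → ℝ)) '' ↑I) := by
  rw [simplexFace, ← direction_affineSpan, affineSpan_convexHull, direction_affineSpan]

theorem simplexFace_nonempty {I : Finset (Fin n)} (hI : I.Nonempty) : (simplexFace I).Nonempty :=
  convexHull_nonempty_iff.2 ((coe_nonempty.2 hI).image _)

theorem IsBuildingSet.finrank_iSup_vectorSpan {Q : Finset (Finset (Fin n))}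
    (hQ : IsBuildingSet n Q) :
    Module.finrank ℝ ↥(⨆ K ∈ Q, vectorSpan ℝ ((fun i => (Pi.single i 1 : Fin n → ℝ)) '' ↑K)) =
      n - cComp Q := by
  have hcomp : (⨆ K ∈ Q, vectorSpan ℝ ((fun i => (Pi.single i 1 : Fin n → ℝ)) '' ↑K)) =
      ⨆ T ∈ hQ.components.parts, vectorSpan ℝ ((fun i => (Pi.single i 1 : Fin n → ℝ)) '' ↑T) := by
    refine le_antisymm (iSup₂_le fun K hK => ?_) (biSup_mono fun T hT => maxMembers_subset Q hT)
    obtain ⟨T, hT, hKT⟩ := exists_mem_maxMembers_superset hK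
    exact le_iSup₂_of_le (f := fun T _ => vectorSpan ℝ _) T hT
      (vectorSpan_mono ℝ (Set.image_mono (coe_subset.2 hKT)))
  rw [hcomp, hQ.components.finrank_iSup_vectorSpan_parts, Fintype.card_fin]
  rfl

section LevelFunctional

variable {B C : Finset (Finset (Fin n))}

def topLevel (C : Finset (Finset (Fin n))) (I : Finset (Fin n)) : Finset (Fin n) :=
  {i ∈ I | ∀ j ∈ I, lv C j ≤ lv C i}

theorem topLevel_subset {I : Finset (Fin n)} : topLevel C I ⊆ I := filter_subset _ _

theorem topLevel_nonempty {I : Finset (Fin n)} (hI : I.Nonempty) : (topLevel C I).Nonempty := by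
  obtain ⟨m, hm, hmax⟩ := exists_max_image I (lv C) hI
  exact ⟨m, mem_filter.2 ⟨hm, hmax⟩⟩

theorem lv_mem_relintBraidCone (hC : IsFlag n C) : (fun p => (lv C p : ℝ)) ∈ relintBraidCone C := by
  refine fun p q => ⟨fun h => ?_, fun ⟨A, hA, hpA, hqA⟩ => ?_⟩
  · simp only [lv, filter_congr fun A hA => not_congr (h A hA)]
  · have hsub : {A' ∈ C | p ∉ A'} ⊂ {A' ∈ C | q ∉ A'} := by
      refine Finset.ssubset_iff_subset_ne.2 ⟨fun A' hA' => ?_, fun heq => ?_⟩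
      · rw [mem_filter] at hA' ⊢
        refine ⟨hA'.1, fun hqA' => hA'.2 ?_⟩
        rcases hC.2 A hA A' hA'.1 with h | h
        · exact h hpA
        · exact absurd (h hqA') hqA
      · have hA' : A ∈ {A' ∈ C | p ∉ A'} := heq ▸ mem_filter.2 ⟨hA, hqA⟩
        exact (mem_filter.1 hA').2 hpA
    show (lv C p : ℝ) < lv C q
    exact_mod_cast card_lt_card hsub

theorem quotientBS_eq_image_topLevel (hB : ∀ I ∈ B, I.Nonempty) :
    quotientBS B C = B.image (topLevel C) := by
  ext K
  rw [mem_quotientBS, mem_image]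
  constructor
  · rintro ⟨j, -, hK⟩
    obtain ⟨hKsub, ⟨k, hk⟩, S, hS, hKS⟩ := mem_bsMinor.1 hK
    have hlvK : ∀ p ∈ K, lv C p = j := fun p hp => mem_fullChain_succ_sdiff.1 (hKsub hp)
    have hlvS : ∀ p ∈ S, lv C p < j := fun p hp => mem_fullChain.1 (hS hp)
    refine ⟨K ∪ S, hKS, ext fun i => ?_⟩
    simp only [topLevel, mem_filter, mem_union]
    constructor
    · rintro ⟨hi | hi, hmax⟩
      · exact hi
      · have := hmax k (Or.inl hk)
        rw [hlvK k hk] at this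
        exact absurd (hlvS i hi) this.not_gt
    · intro hi
      refine ⟨Or.inl hi, fun i' hi' => ?_⟩
      rw [hlvK i hi]
      exact hi'.elim (fun h => (hlvK i' h).le) fun h => (hlvS i' h).le
  · rintro ⟨I, hI, rfl⟩
    obtain ⟨m, hm⟩ := topLevel_nonempty (C := C) (hB I hI)
    have htop : ∀ i ∈ topLevel C I, lv C i = lv C m := fun i hi =>
      le_antisymm ((mem_filter.1 hm).2 i (topLevel_subset hi))
        ((mem_filter.1 hi).2 m (topLevel_subset hm))
    refine ⟨lv C m, Nat.lt_succ_of_le (card_filter_le _ _), mem_bsMinor.2 ⟨fun i hi => ?_,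
      ⟨m, hm⟩, I \ topLevel C I, fun p hp => ?_, by rwa [union_sdiff_of_subset topLevel_subset]⟩⟩
    · exact mem_fullChain_succ_sdiff.2 (htop i hi)
    · rw [mem_sdiff, topLevel, mem_filter, not_and, not_forall₂] at hp
      obtain ⟨i', hi', hlt⟩ := hp.2 hp.1
      exact mem_fullChain.2 ((not_le.1 hlt).trans_le (htop _ hm ▸ (mem_filter.1 hm).2 i' hi'))

theorem argmaxSet_nestoh_lv (hB : ∀ I ∈ B, I.Nonempty) :
    argmaxSet (nestoh B) (fun p => (lv C p : ℝ)) = ∑ I ∈ B, simplexFace (topLevel C I) := by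
  have hface : ∀ I, argmaxSet (simplexFace I) (fun p => (lv C p : ℝ)) =
      simplexFace (topLevel C I) := fun I => by
    simp only [argmaxSet_simplexFace, Nat.cast_le, topLevel]
  have hne : ∀ I ∈ B, (argmaxSet (simplexFace I) (fun p => (lv C p : ℝ))).Nonempty :=
    fun I hI => hface I ▸ simplexFace_nonempty (topLevel_nonempty (hB I hI))
  rw [nestoh, argmaxSet_sum B simplexFace hne]
  exact sum_congr rfl fun I _ => hface I

theorem pdim_argmaxSet_nestoh_lv (hB : IsBuildingSet n B) :
    pdim (argmaxSet (nestoh B) (fun p => (lv C p : ℝ))) = n - cComp (quotientBS B C) := by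
  have hspan : (⨆ I ∈ B, vectorSpan ℝ (simplexFace (topLevel C I))) =
      ⨆ K ∈ quotientBS B C, vectorSpan ℝ ((fun i => (Pi.single i 1 : Fin n → ℝ)) '' ↑K) := by
    simp only [vectorSpan_simplexFace, quotientBS_eq_image_topLevel hB.1, iSup_finset_image]
  rw [pdim, argmaxSet_nestoh_lv hB.1,
    vectorSpan_sum _ _ fun I hI => simplexFace_nonempty (topLevel_nonempty (hB.1 I hI)), hspan,
    (quotientBS_isBuildingSet hB).finrank_iSup_vectorSpan]

end LevelFunctional

theorem nestohedron_rank_eq_rkB_general (n : ℕ)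
    (B : Finset (Finset (Fin n))) (hB : IsBuildingSet n B)
    (C : Finset (Finset (Fin n))) (hC : IsFlag n C)
    (G : Set (Fin n → ℝ))
    (hG : ∀ ω ∈ relintBraidCone C, argmaxSet (nestoh B) ω = G) :
    pdim G = rkB B C ∧ rkB B C = n - cComp (quotientBS B C) := by
  have hrk := rkB_add_cComp_quotientBS (C := C) hB
  rw [← hG _ (lv_mem_relintBraidCone hC), pdim_argmaxSet_nestoh_lv hB]
  omega

/-- For a connected building set `B` on `[n]` and any flag `L` of subsets of
`[n]`, the `P_B`-rank of `L` (the dimension of the face `π_{P_B}(L)` of the nestohedron) equals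
the rank of `L` according to `B`, and both equal `n - c(B/L)`:
`rk_{P_B}(L) = rk_B(L) = n - c(B/L)`. -/
theorem nestohedron_rank_eq_rkB (n : ℕ) (hn : 0 < n)
    (B : Finset (Finset (Fin n))) (hB : IsBuildingSet n B) (hconn : Finset.univ ∈ B)
    (C : Finset (Finset (Fin n))) (hC : IsFlag n C)
    (G : Set (Fin n → ℝ)) (hGface : IsFace (nestoh B) G)
    (hG : ∀ ω ∈ relintBraidCone C, argmaxSet (nestoh B) ω = G) :
    pdim G = rkB B C ∧ rkB B C = n - cComp (quotientBS B C) :=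
  nestohedron_rank_eq_rkB_general n B hB C hC G hG
end
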